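/- Let n > k ≥ 1, let η ∈ (ℤ_{≥0})^k and μ̃ ∈ (ℤ_{≥0})^{n−k}, and let ζ = (η|μ̃) ∈ (ℤ_{≥0})^n be their concatenation. Let I₁ = {t₁ < ⋯ < t_r} ⊆ {1,…,k}, set t_{r+1} := k+1, and let 0 ≤ m ≤ n−k−1. Assume the maximality conditions: (i) for every u ∈ {1,…,r} and every j with t_u < j < t_{u+1}, η_{t_u} ≠ η_j; and (ii) for every j with 1 ≤ j < t₁, η_j ≠ μ̃_{m+1} − 1. Then none of the numerator factors of p_{I₁} vanish; that is, ζ̄_{t_u} − t·ζ̄_j ≠ 0 in K for every u ∈ {1,…,r} and every t_u < j < t_{u+1}, and q^{−1}·ζ̄_{k+m+1} − t·ζ̄_j ≠ 0 in K for every 1 ≤ j < t₁. -/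
import Mathlib


noncomputable section
set_option synthInstance.maxHeartbeats 1000000
set_option maxHeartbeats 1000000

open MvPolynomial

/-- `K = ℚ(q,t)`, the field of rational functions in two indeterminates over `ℚ`. -/
abbrev Kq : Type := FractionRing (MvPolynomial (Fin 2) ℚ)

/-- The indeterminate `q`. -/
def qv : Kq := algebraMap (MvPolynomial (Fin 2) ℚ) Kq (X 0)

/-- The indeterminate `t`. -/
def tv : Kq := algebraMap (MvPolynomial (Fin 2) ℚ) Kq (X 1)

/-- `ℓ′_ν(i) = #{j < i : ν_j ≥ ν_i} + #{j > i : ν_j > ν_i}`. -/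
def lprime (n : ℕ) (ν : Fin n → ℕ) (i : Fin n) : ℕ :=
  (Finset.univ.filter fun j : Fin n => j < i ∧ ν i ≤ ν j).card +
  (Finset.univ.filter fun j : Fin n => i < j ∧ ν i < ν j).card

/-- The eigenvalue `ν̄_i = q^{ν_i} t^{−ℓ′_ν(i)}`. -/
def eig (n : ℕ) (ν : Fin n → ℕ) (i : Fin n) : Kq :=
  qv ^ (ν i) * tv ^ (-(lprime n ν i : ℤ))

set_option linter.unnecessarySimpa false

lemma qv_ne : qv ≠ 0 := by
  simpa [qv] using
    (map_ne_zero_iff _ (IsFractionRing.injective (MvPolynomial (Fin 2) ℚ) Kq)).mpr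
      (X_ne_zero 0)

lemma tv_ne : tv ≠ 0 := by
  simpa [tv] using
    (map_ne_zero_iff _ (IsFractionRing.injective (MvPolynomial (Fin 2) ℚ) Kq)).mpr
      (X_ne_zero 1)

lemma aux1 (e f : ℕ) (he : 1 ≤ e) : qv ^ e ≠ tv ^ f := by
  intro h
  have h0 : (X 0 : MvPolynomial (Fin 2) ℚ) ^ e = X 1 ^ f := by
    apply IsFractionRing.injective (MvPolynomial (Fin 2) ℚ) Kq
    simpa [qv, tv, map_pow] using h
  have h2 := congrArg (eval (fun i : Fin 2 => if i = 0 then (0:ℚ) else 1)) h0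
  simp [zero_pow (by omega : e ≠ 0)] at h2

lemma aux2 (e f : ℕ) (he : 1 ≤ e) : qv ^ e * tv ^ f ≠ 1 := by
  intro h
  have h0 : (X 0 : MvPolynomial (Fin 2) ℚ) ^ e * X 1 ^ f = 1 := by
    apply IsFractionRing.injective (MvPolynomial (Fin 2) ℚ) Kq
    simpa [qv, tv, map_pow, map_mul] using h
  have h2 := congrArg (eval (fun _ : Fin 2 => (0:ℚ))) h0
  simp [zero_pow (by omega : e ≠ 0)] at h2

lemma qz (e : ℤ) (he : 0 < e) (f : ℤ) : qv ^ e ≠ tv ^ f := by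
  intro h
  lift e to ℕ using he.le
  rcases le_or_gt 0 f with hf | hf
  · lift f to ℕ using hf
    rw [zpow_natCast, zpow_natCast] at h
    exact aux1 e f (by exact_mod_cast he) h
  · obtain ⟨g, rfl⟩ : ∃ g : ℕ, f = -(g:ℤ) := ⟨f.natAbs, by omega⟩
    rw [zpow_natCast, zpow_neg, zpow_natCast] at h
    have hmul : qv ^ e * tv ^ g = 1 := by
      rw [h, inv_mul_cancel₀ (pow_ne_zero g tv_ne)]
    exact aux2 e g (by exact_mod_cast he) hmul

lemma key (a c b d : ℤ) (h : a ≠ c) : qv ^ a * tv ^ b ≠ qv ^ c * tv ^ d := by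
  intro heq
  have h1 : qv ^ (a - c) = tv ^ (d - b) := by
    rw [zpow_sub₀ qv_ne, zpow_sub₀ tv_ne,
      div_eq_div_iff (zpow_ne_zero _ qv_ne) (zpow_ne_zero _ tv_ne)]
    linear_combination heq
  rcases lt_trichotomy a c with hlt | heq' | hlt
  · apply qz (c - a) (by omega) (b - d)
    rw [show c - a = -(a - c) by ring, show b - d = -(d - b) by ring,
      zpow_neg, zpow_neg, h1]
  · exact h heq'
  · exact qz (a - c) (by omega) (d - b) h1

lemma eig_sub_ne (a c b d : ℕ) (h : (a:ℤ) ≠ (c:ℤ)) :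
    qv ^ a * tv ^ (-(b:ℤ)) - tv * (qv ^ c * tv ^ (-(d:ℤ))) ≠ 0 := by
  apply sub_ne_zero_of_ne
  have h2 : tv * (qv ^ c * tv ^ (-(d:ℤ))) = qv ^ (c:ℤ) * tv ^ (1 - (d:ℤ)) := by
    rw [← zpow_natCast qv c, sub_eq_add_neg, zpow_add₀ tv_ne, zpow_one]; ring
  rw [h2, ← zpow_natCast qv a]
  exact key _ _ _ _ h

lemma eig_sub_ne' (a c b d : ℕ) (h : (a:ℤ) - 1 ≠ (c:ℤ)) :
    qv⁻¹ * (qv ^ a * tv ^ (-(b:ℤ))) - tv * (qv ^ c * tv ^ (-(d:ℤ))) ≠ 0 := by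
  apply sub_ne_zero_of_ne
  have h1 : qv⁻¹ * (qv ^ a * tv ^ (-(b:ℤ))) = qv ^ ((a:ℤ) - 1) * tv ^ (-(b:ℤ)) := by
    rw [← zpow_natCast qv a, sub_eq_add_neg, zpow_add₀ qv_ne, zpow_neg_one]; ring
  have h2 : tv * (qv ^ c * tv ^ (-(d:ℤ))) = qv ^ (c:ℤ) * tv ^ (1 - (d:ℤ)) := by
    rw [← zpow_natCast qv c, sub_eq_add_neg, zpow_add₀ tv_ne, zpow_one]; ring
  rw [h1, h2]
  exact key _ _ _ _ h

/-- Nonvanishing of the numerator factors of `p_{I₁}` when `I₁` is maximal.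
Here `n = k + d` with `d = n − k ≥ 1`, `ζ = (η|μ̃)`, `I₁ = {t₁ < ⋯ < t_r} ⊆ {1,…,k}`
is encoded by the strictly increasing `ts : Fin (r+1) → ℕ` with `ts (last) = k+1`
(playing the role of `t_{r+1} := k+1`), and `0 ≤ m ≤ n−k−1`. -/
theorem pI1_numerator_factors_nonzero (k d : ℕ) (hk : 1 ≤ k) (hd : 1 ≤ d)
    (η : Fin k → ℕ) (μt : Fin d → ℕ)
    (r : ℕ) (ts : Fin (r + 1) → ℕ) (hts : StrictMono ts)
    (hrange : ∀ u : Fin r, 1 ≤ ts u.castSucc ∧ ts u.castSucc ≤ k)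
    (hlast : ts (Fin.last r) = k + 1)
    (m : ℕ) (hm : m < d)
    (hmax1 : ∀ (u : Fin r) (j : ℕ), (hj1 : ts u.castSucc < j) → (hj2 : j < ts u.succ) →
      η ⟨ts u.castSucc - 1, by have := hrange u; omega⟩ ≠
        η ⟨j - 1, by
            have h := hts.monotone (Fin.le_last u.succ)
            rw [hlast] at h
            omega⟩)
    (hmax2 : ∀ j : ℕ, (hj0 : 1 ≤ j) → (hj1 : j < ts 0) →
      (η ⟨j - 1, by
            have h := hts.monotone (Fin.zero_le (Fin.last r))
            rw [hlast] at h
            omega⟩ : ℤ) ≠ (μt ⟨m, hm⟩ : ℤ) - 1) :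
    (∀ (u : Fin r) (j : ℕ), (hj1 : ts u.castSucc < j) → (hj2 : j < ts u.succ) →
      eig (k + d) (Fin.append η μt)
          ⟨ts u.castSucc - 1, by have := hrange u; omega⟩ -
        tv * eig (k + d) (Fin.append η μt)
          ⟨j - 1, by
            have h := hts.monotone (Fin.le_last u.succ)
            rw [hlast] at h
            omega⟩ ≠ 0) ∧
    (∀ j : ℕ, (hj0 : 1 ≤ j) → (hj1 : j < ts 0) →
      qv⁻¹ * eig (k + d) (Fin.append η μt) ⟨k + m, by omega⟩ -
        tv * eig (k + d) (Fin.append η μt)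
          ⟨j - 1, by
            have h := hts.monotone (Fin.zero_le (Fin.last r))
            rw [hlast] at h
            omega⟩ ≠ 0) := by
  
  have happ : ∀ (i : ℕ) (h1 : i < k) (h2 : i < k + d),
      Fin.append η μt ⟨i, h2⟩ = η ⟨i, h1⟩ := by
    intro i h1 h2
    have hx : (⟨i, h2⟩ : Fin (k + d)) = Fin.castAdd d ⟨i, h1⟩ := rfl
    rw [hx, Fin.append_left]
  have happ2 : ∀ (h2 : k + m < k + d), Fin.append η μt ⟨k + m, h2⟩ = μt ⟨m, hm⟩ := by
    intro h2
    have hx : (⟨k + m, h2⟩ : Fin (k + d)) = Fin.natAdd k ⟨m, hm⟩ := rfl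
    rw [hx, Fin.append_right]
  constructor
  · intro u j hj1 hj2
    have hjk : j - 1 < k := by
      have h := hts.monotone (Fin.le_last u.succ); rw [hlast] at h; omega
    have htk : ts u.castSucc - 1 < k := by have := hrange u; omega
    simp only [eig]
    rw [happ _ htk _, happ _ hjk _]
    exact eig_sub_ne _ _ _ _ (by exact_mod_cast hmax1 u j hj1 hj2)
  · intro j hj0 hj1
    have hjk : j - 1 < k := by
      have h := hts.monotone (Fin.zero_le (Fin.last r)); rw [hlast] at h; omega
    simp only [eig]
    rw [happ2 _, happ _ hjk _]
    exact eig_sub_ne' _ _ _ _ (by have := hmax2 j hj0 hj1; omega)
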